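/- On ℝ³ with coordinates (y₁,y₂,y₃), let X₁ = ∂_{y₁} + y₂∂_{y₃}, X₂ = ∂_{y₂}, X₃ = ∂_{y₃}. For any constants C₁, C₂, the triple of functions w₂ = 0, w₃ = C₁e^{y₁}, w₄ = (C₁/2)e^{y₁} + C₂e^{−y₁} satisfies: X₁w₂ − (1/3)(X₁w₂+X₂w₃+X₃w₄) = 0; X₁w₃ − w₃ = 0; X₁w₄ + w₄ − w₃ = 0; X₂w₂ = 0; X₂w₃ − w₂ − (1/3)(X₁w₂+X₂w₃+X₃w₄) = 0; X₂w₄ = 0; X₃w₂ = 0; X₃w₃ = 0. -/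

import Mathlib

noncomputable section

abbrev Pt3 := Fin 3 → ℝ

/-- The frame X₁ = ∂_{y₁} + y₂∂_{y₃}, X₂ = ∂_{y₂}, X₃ = ∂_{y₃}. -/
def Xvf : Fin 3 → Pt3 → Pt3
  | 0 => fun p => ![1, 0, p 1]
  | 1 => fun _ => ![0, 1, 0]
  | 2 => fun _ => ![0, 0, 1]

/-- Directional derivative of a function along the vector field Xᵢ. -/
def Dvf (i : Fin 3) (f : Pt3 → ℝ) : Pt3 → ℝ :=
  fun p => fderiv ℝ f p (Xvf i p)

/-! Each wᵢ depends on y₁ alone, and of the three fields only X₁ has a ∂_{y₁} component, so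
every equation reduces to an identity between exponentials in y₁. -/

theorem Dvf_const (c : ℝ) (i : Fin 3) (p : Pt3) : Dvf i (fun _ => c) p = 0 := by
  simp [Dvf]

theorem Dvf_comp_apply_zero {g : ℝ → ℝ} {g' : ℝ} {p : Pt3} (hg : HasDerivAt g g' (p 0))
    (i : Fin 3) : Dvf i (fun q => g (q 0)) p = g' * Xvf i p 0 := by
  have hfd : HasFDerivAt (fun q : Pt3 => g (q 0))
      (g' • ContinuousLinearMap.proj (R := ℝ) (φ := fun _ : Fin 3 => ℝ) 0) p :=
    hg.comp_hasFDerivAt p (hasFDerivAt_apply 0 p)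
  simp [Dvf, hfd.fderiv]

@[simp] theorem Xvf_zero_apply_zero (p : Pt3) : Xvf 0 p 0 = 1 := rfl

@[simp] theorem Xvf_one_apply_zero (p : Pt3) : Xvf 1 p 0 = 0 := rfl

@[simp] theorem Xvf_two_apply_zero (p : Pt3) : Xvf 2 p 0 = 0 := rfl

theorem stmt6 (C1 C2 : ℝ) :
    let w2 : Pt3 → ℝ := fun _ => 0
    let w3 : Pt3 → ℝ := fun p => C1 * Real.exp (p 0)
    let w4 : Pt3 → ℝ := fun p => (C1 / 2) * Real.exp (p 0) + C2 * Real.exp (-(p 0))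
    (∀ p, Dvf 0 w2 p - (1/3) * (Dvf 0 w2 p + Dvf 1 w3 p + Dvf 2 w4 p) = 0) ∧
    (∀ p, Dvf 0 w3 p - w3 p = 0) ∧
    (∀ p, Dvf 0 w4 p + w4 p - w3 p = 0) ∧
    (∀ p, Dvf 1 w2 p = 0) ∧
    (∀ p, Dvf 1 w3 p - w2 p - (1/3) * (Dvf 0 w2 p + Dvf 1 w3 p + Dvf 2 w4 p) = 0) ∧
    (∀ p, Dvf 1 w4 p = 0) ∧
    (∀ p, Dvf 2 w2 p = 0) ∧
    (∀ p, Dvf 2 w3 p = 0) := by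
  intro w2 w3 w4
  have hw2 (i : Fin 3) (p : Pt3) : Dvf i w2 p = 0 := Dvf_const 0 i p
  have hw3 (i : Fin 3) (p : Pt3) : Dvf i w3 p = C1 * Real.exp (p 0) * Xvf i p 0 :=
    Dvf_comp_apply_zero (g := fun x => C1 * Real.exp x) ((Real.hasDerivAt_exp _).const_mul C1) i
  have hw4 (i : Fin 3) (p : Pt3) :
      Dvf i w4 p = (C1 / 2 * Real.exp (p 0) - C2 * Real.exp (-(p 0))) * Xvf i p 0 :=
    Dvf_comp_apply_zero (g := fun x => C1 / 2 * Real.exp x + C2 * Real.exp (-x))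
      ((((Real.hasDerivAt_exp _).const_mul (C1 / 2)).add
        ((hasDerivAt_neg _).exp.const_mul C2)).congr_deriv (by ring)) i
  refine ⟨?_, ?_, ?_, ?_, ?_, ?_, ?_, ?_⟩ <;> intro p <;>
    simp only [hw2, hw3, hw4, w2, w3, w4, Xvf_zero_apply_zero, Xvf_one_apply_zero,
      Xvf_two_apply_zero] <;> ring
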